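/- arXiv:2405.04510 — 2 statements merged into one kernel-verified Lean document; each statement's English description precedes it below -/
import Mathlib

section
/- Abelian property: fix an array of instructions τ, a configuration η, and a set V ⊂ ℤ^d. If α and β are both τ-legal toppling sequences for η that are contained in V and stabilize η in V (i.e. the resulting configuration has no active particles in V), then m_α = m_β = m^τ_{V,η}, and the resulting configurations are equal: Φ^τ_α(η, 0) = Φ^τ_β(η, 0). -/
open MeasureTheory

noncomputable section

/-! ## Site-wise (Diaconis–Fulton) representation of Activated Random Walk -/

/-- An instruction: either a sleep instruction or a jump instruction to a site. -/
inductive Instr (Λ : Type*) where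
  | sleep : Instr Λ
  | jump : Λ → Instr Λ

instance {Λ : Type*} : MeasurableSpace (Instr Λ) := ⊤

/-- The state of a site: either one sleeping particle (`𝔰`), or `k` active particles. -/
inductive SiteState where
  | sleeping : SiteState
  | act : ℕ → SiteState

/-- Total number of particles on a site. -/
def SiteState.particles : SiteState → ℕ
  | sleeping => 1
  | act k => k

/-- Number of active particles on a site. -/
def SiteState.activeCount : SiteState → ℕ
  | sleeping => 0
  | act k => k

/-- Remove one particle from a site (waking the site first if it was sleeping). -/
def SiteState.remove : SiteState → SiteState
  | sleeping => act 0
  | act k => act (k - 1)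

/-- Add one active particle to a site, waking any sleeping particle there. -/
def SiteState.add (s : SiteState) : SiteState := act (s.particles + 1)

/-- A configuration `η : Λ → ℕ ∪ {𝔰}` of the activated random walk. -/
abbrev Config (Λ : Type*) := Λ → SiteState

variable {Λ : Type*} [DecidableEq Λ]

/-- The effect of the instruction `ι` applied at the site `x`: a sleep instruction puts the
particle at `x` to sleep if it is alone (otherwise nothing happens); a jump instruction to `y`
moves one particle from `x` to `y`, waking any sleeping particle at `y`.  (For an acceptable
but not legal toppling, the sleeping particle at `x` is first woken up.) -/
def applyInstr (ι : Instr Λ) (x : Λ) (η : Config Λ) : Config Λ :=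
  match ι with
  | .sleep => Function.update η x (if (η x).particles = 1 then .sleeping else η x)
  | .jump y =>
      let η₁ := Function.update η x (η x).remove
      Function.update η₁ y (η₁ y).add

/-- A state of the site-wise representation: a configuration together with the odometer
counting the number of instructions already used at each site. -/
abbrev SWState (Λ : Type*) := Config Λ × (Λ → ℕ)

/-- Toppling the site `x`: apply the next unused instruction at `x` (instructions being
numbered from `0`) and increment the odometer at `x`.  This is the operator `Φ^τ_x`. -/
def topple (τ : Λ → ℕ → Instr Λ) (x : Λ) (s : SWState Λ) : SWState Λ :=
  (applyInstr (τ x (s.2 x)) x s.1, Function.update s.2 x (s.2 x + 1))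

/-- `Φ^τ_α` for a toppling sequence `α`. -/
def toppleSeq (τ : Λ → ℕ → Instr Λ) (α : List Λ) (s : SWState Λ) : SWState Λ :=
  α.foldl (fun s x => topple τ x s) s

/-- A toppling at `x` is legal if `x` holds at least one active particle. -/
def IsLegal (s : SWState Λ) (x : Λ) : Prop := 0 < (s.1 x).activeCount

/-- A toppling at `x` is acceptable if `x` holds at least one particle. -/
def IsAcceptable (s : SWState Λ) (x : Λ) : Prop := 0 < (s.1 x).particles

/-- A `τ`-legal sequence of topplings starting from the state `s`. -/
def LegalSeq (τ : Λ → ℕ → Instr Λ) : List Λ → SWState Λ → Prop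
  | [], _ => True
  | x :: rest, s => IsLegal s x ∧ LegalSeq τ rest (topple τ x s)

/-- A `τ`-acceptable sequence of topplings starting from the state `s`. -/
def AcceptableSeq (τ : Λ → ℕ → Instr Λ) : List Λ → SWState Λ → Prop
  | [], _ => True
  | x :: rest, s => IsAcceptable s x ∧ AcceptableSeq τ rest (topple τ x s)

/-- The initial state associated with a configuration: zero odometer. -/
def init (η : Config Λ) : SWState Λ := (η, fun _ => 0)

/-- `α` stabilizes `η` in `V`: after applying `α`, no site of `V` holds an active particle. -/
def StabilizesIn (τ : Λ → ℕ → Instr Λ) (α : List Λ) (η : Config Λ) (V : Set Λ) : Prop :=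
  ∀ x ∈ V, ((toppleSeq τ α (init η)).1 x).activeCount = 0

/-- The odometer `m_α` of a toppling sequence `α`: the number of occurrences of each site. -/
def seqOdometer (α : List Λ) (x : Λ) : ℕ := α.count x

/-- `m^τ_{V,η}`: the supremum of `m_α` over `τ`-legal toppling sequences `α` contained in `V`,
started from `η` with zero odometer. -/
def mV (τ : Λ → ℕ → Instr Λ) (V : Set Λ) (η : Config Λ) (x : Λ) : ℕ∞ :=
  ⨆ α : {α : List Λ // (∀ y ∈ α, y ∈ V) ∧ LegalSeq τ α (init η)}, (seqOdometer α.1 x : ℕ∞)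

/-- The total stabilization odometer `m^τ_η`. -/
def mTot (τ : Λ → ℕ → Instr Λ) (η : Config Λ) (x : Λ) : ℕ∞ :=
  ⨆ α : {α : List Λ // LegalSeq τ α (init η)}, (seqOdometer α.1 x : ℕ∞)

end

/-!
Topplings of two distinct legal sites commute, since each instruction only touches its own site
and its jump target, and an active site stays active. Hence a legal site can be moved to the
front of any legal sequence that topples it. By induction, legal sequences that are permutations
of each other end in the same state, and a legal sequence inside `V` is a sub-permutation of
every legal sequence stabilizing `V`. Two stabilizing sequences are therefore permutations of
each other, and both odometers equal `m^τ_{V,η}`.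
-/

section Abelian

variable {Λ : Type*} [DecidableEq Λ] {τ : Λ → ℕ → Instr Λ}

omit [DecidableEq Λ] in
lemma IsLegal.exists_eq_act {s : SWState Λ} {x : Λ} (h : IsLegal s x) :
    ∃ k, 0 < k ∧ s.1 x = .act k := by
  unfold IsLegal at h
  cases hc : s.1 x with
  | sleeping => simp [hc, SiteState.activeCount] at h
  | act k => exact ⟨k, by simpa [hc, SiteState.activeCount] using h, rfl⟩

/-- The one delicate case is a sleep instruction at `x` against a jump from `y` to `x`: if the
particle at `x` falls asleep first, the arriving particle wakes it up again. -/
lemma applyInstr_comm {c : Config Λ} {x y : Λ} (hxy : x ≠ y) (ι κ : Instr Λ)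
    {k m : ℕ} (hk : 0 < k) (hm : 0 < m) (hx : c x = .act k) (hy : c y = .act m) :
    applyInstr ι x (applyInstr κ y c) = applyInstr κ y (applyInstr ι x c) := by
  cases ι <;> cases κ <;>
  · funext u
    simp only [applyInstr, Function.update_apply]
    split_ifs <;> subst_vars <;>
      simp_all only [SiteState.remove, SiteState.add, SiteState.particles, SiteState.act.injEq,
        ne_eq, not_true, not_false_iff] <;>
      omega

lemma IsLegal.topple_of_ne {s : SWState Λ} {x y : Λ} (h : IsLegal s x) (hxy : x ≠ y) :
    IsLegal (topple τ y s) x := by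
  obtain ⟨k, hk, hc⟩ := h.exists_eq_act
  unfold IsLegal topple
  cases τ y (s.2 y) with
  | sleep => simpa [applyInstr, hxy, hc, SiteState.activeCount] using hk
  | jump z =>
      by_cases hz : x = z
      · simp [applyInstr, hz, SiteState.add, SiteState.activeCount]
      · simpa [applyInstr, hz, hxy, hc, SiteState.activeCount] using hk

lemma topple_comm {s : SWState Λ} {x y : Λ} (hxy : x ≠ y) (hx : IsLegal s x)
    (hy : IsLegal s y) : topple τ x (topple τ y s) = topple τ y (topple τ x s) := by
  obtain ⟨k, hk, hcx⟩ := hx.exists_eq_act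
  obtain ⟨m, hm, hcy⟩ := hy.exists_eq_act
  simp only [topple, Function.update_of_ne hxy, Function.update_of_ne hxy.symm]
  exact Prod.ext (applyInstr_comm hxy _ _ hk hm hcx hcy) (Function.update_comm hxy.symm _ _ _)

lemma IsLegal.toppleSeq_of_not_mem {s : SWState Λ} {β : List Λ} {x : Λ}
    (hx : IsLegal s x) (hβ : LegalSeq τ β s) (hxβ : x ∉ β) :
    IsLegal (toppleSeq τ β s) x := by
  induction β generalizing s with
  | nil => exact hx
  | cons y γ ih =>
      rw [List.mem_cons, not_or] at hxβ
      exact ih (hx.topple_of_ne hxβ.1) hβ.2 hxβ.2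

lemma LegalSeq.cons_erase {s : SWState Λ} {β : List Λ} {x : Λ} (hβ : LegalSeq τ β s)
    (hx : IsLegal s x) (hxβ : x ∈ β) :
    LegalSeq τ (x :: β.erase x) s ∧ toppleSeq τ (x :: β.erase x) s = toppleSeq τ β s := by
  induction β generalizing s with
  | nil => cases hxβ
  | cons y γ ih =>
      obtain ⟨hy, hγ⟩ := hβ
      by_cases hyx : y = x
      · subst hyx
        rw [List.erase_cons_head]
        exact ⟨⟨hy, hγ⟩, rfl⟩
      have hxγ : x ∈ γ := (List.mem_cons.mp hxβ).resolve_left (Ne.symm hyx)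
      obtain ⟨⟨-, hγ'⟩, hγ_eq⟩ := ih hγ (hx.topple_of_ne (Ne.symm hyx)) hxγ
      have hcomm := topple_comm (τ := τ) (Ne.symm hyx) hx hy
      rw [List.erase_cons_tail (by simpa using hyx)]
      refine ⟨⟨hx, hy.topple_of_ne hyx, hcomm ▸ hγ'⟩, ?_⟩
      change toppleSeq τ (γ.erase x) (topple τ y (topple τ x s)) = toppleSeq τ γ (topple τ y s)
      rw [← hcomm]
      exact hγ_eq

lemma toppleSeq_eq_of_perm {s : SWState Λ} {α β : List Λ} (hα : LegalSeq τ α s)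
    (hβ : LegalSeq τ β s) (hαβ : α.Perm β) : toppleSeq τ α s = toppleSeq τ β s := by
  induction α generalizing β s with
  | nil => rw [List.nil_perm.mp hαβ]
  | cons x α' ih =>
      have hxβ : x ∈ β := hαβ.subset List.mem_cons_self
      obtain ⟨⟨-, hβ'⟩, hβ_eq⟩ := hβ.cons_erase hα.1 hxβ
      rw [← hβ_eq]
      exact ih hα.2 hβ' ((hαβ.trans (List.perm_cons_erase hxβ)).cons_inv)

/-- Least action principle: a legal site stays legal until it is toppled, so `β` must topple
the first site of `α`, and that toppling can be moved to the front of `β`. -/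
lemma LegalSeq.subperm_of_stable {s : SWState Λ} {V : Set Λ} {α β : List Λ}
    (hαV : ∀ x ∈ α, x ∈ V) (hα : LegalSeq τ α s) (hβ : LegalSeq τ β s)
    (hβstab : ∀ x ∈ V, ((toppleSeq τ β s).1 x).activeCount = 0) : α.Subperm β := by
  induction α generalizing s β with
  | nil => exact List.nil_subperm
  | cons x α' ih =>
      have hxβ : x ∈ β := by
        by_contra hxβ
        exact (hβstab x (hαV x List.mem_cons_self)).not_gt (hα.1.toppleSeq_of_not_mem hβ hxβ)
      obtain ⟨⟨-, hβ'⟩, hβ_eq⟩ := hβ.cons_erase hα.1 hxβ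
      have hsub : α'.Subperm (β.erase x) :=
        ih (fun z hz => hαV z (List.mem_cons_of_mem _ hz)) hα.2 hβ' (hβ_eq ▸ hβstab)
      exact ((List.subperm_cons x).mpr hsub).trans (List.perm_cons_erase hxβ).symm.subperm

end Abelian

noncomputable section

abbrev Zd (d : ℕ) := Fin d → ℤ

/-- **Abelian property** (Lemma 2 in Rolla–Sidoravicius).  If `α` and `β` are both `τ`-legal
toppling sequences for `η` that are contained in `V` and stabilize `η` in `V`, then
`m_α = m_β = m^τ_{V,η}` and the resulting configurations (and odometers) are equal:
`Φ^τ_α(η, 0) = Φ^τ_β(η, 0)`. -/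
theorem statement13 {d : ℕ} (τ : Zd d → ℕ → Instr (Zd d)) (η : Config (Zd d))
    (V : Set (Zd d)) (α β : List (Zd d))
    (hαV : ∀ x ∈ α, x ∈ V) (hβV : ∀ x ∈ β, x ∈ V)
    (hα : LegalSeq τ α (init η)) (hβ : LegalSeq τ β (init η))
    (hαstab : StabilizesIn τ α η V) (hβstab : StabilizesIn τ β η V) :
    (∀ x, seqOdometer α x = seqOdometer β x) ∧
    (∀ x, (seqOdometer α x : ℕ∞) = mV τ V η x) ∧
    toppleSeq τ α (init η) = toppleSeq τ β (init η) := by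
  have hαβ : α.Perm β :=
    (hα.subperm_of_stable hαV hβ hβstab).antisymm (hβ.subperm_of_stable hβV hα hαstab)
  refine ⟨fun x => hαβ.count_eq x, fun x => le_antisymm ?_ ?_, toppleSeq_eq_of_perm hα hβ hαβ⟩
  · exact le_iSup (fun γ : {γ // (∀ y ∈ γ, y ∈ V) ∧ LegalSeq τ γ (init η)} =>
      (seqOdometer γ.1 x : ℕ∞)) ⟨α, hαV, hα⟩
  · refine iSup_le fun ⟨γ, hγV, hγ⟩ => ?_
    exact_mod_cast (hγ.subperm_of_stable hγV hα hαstab).count_le x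

end
end

section
/- In dimension 1 with a nearest-neighbour jump distribution, fix an array of instructions and an initial configuration η : V_n → ℕ with only active particles, and stabilize V_n by repeatedly toppling the leftmost site of V_n containing an active particle (particles that jump out of V_n are removed). Then after each toppling of this procedure, there do not exist sites x < y in V_n with an active particle at x and a sleeping particle at y (all sleeping particles lie to the left of the leftmost active particle). Consequently, at each moment when a particle exits V_n through the left boundary, every particle remaining in V_n is active. -/
open MeasureTheory

noncomputable section

/-- `V_n = (−n/2, n/2] ∩ ℤ`. -/
def Vseg (n : ℕ) : Finset ℤ :=
  (Finset.Icc (-(n : ℤ)) (n : ℤ)).filter fun x => -(n : ℤ) < 2 * x ∧ 2 * x ≤ (n : ℤ)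

/-- `x` is the leftmost site of `V_n` holding an active particle in the configuration `η`. -/
def Leftmost (n : ℕ) (η : Config ℤ) (x : ℤ) : Prop :=
  x ∈ Vseg n ∧ 0 < (η x).activeCount ∧ ∀ y ∈ Vseg n, 0 < (η y).activeCount → x ≤ y

/-- A toppling sequence following the leftmost rule: at each step, the toppled site is the
leftmost site of `V_n` containing an active particle in the current configuration. -/
def LeftmostSeq (τ : ℤ → ℕ → Instr ℤ) (n : ℕ) : List ℤ → SWState ℤ → Prop
  | [], _ => True
  | x :: rest, s => Leftmost n s.1 x ∧ LeftmostSeq τ n rest (topple τ x s)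

/-- Invariant: no active particle strictly left of a sleeping particle, within `V_n`. -/
def ARWInv (n : ℕ) (c : Config ℤ) : Prop :=
  ∀ x ∈ Vseg n, ∀ y ∈ Vseg n, x < y → 0 < (c x).activeCount → c y ≠ SiteState.sleeping

lemma ARW_remove_ne_sleeping (s : SiteState) : s.remove ≠ SiteState.sleeping := by
  cases s <;> simp [SiteState.remove]

lemma ARW_add_ne_sleeping (s : SiteState) : s.add ≠ SiteState.sleeping := by
  simp [SiteState.add]

lemma ARW_jump_apply_ne (x y z : ℤ) (c : Config ℤ) (hzy : z ≠ y) (hzx : z ≠ x) :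
    applyInstr (Instr.jump y) x c z = c z := by
  simp only [applyInstr]
  rw [Function.update_of_ne hzy, Function.update_of_ne hzx]

lemma ARW_key (n : ℕ) (c : Config ℤ) (x : ℤ) (ι : Instr ℤ)
    (hι : ι = Instr.sleep ∨ ι = Instr.jump (x + 1) ∨ ι = Instr.jump (x - 1))
    (hc : ARWInv n c) (hx : Leftmost n c x) :
    ARWInv n (applyInstr ι x c) := by
  obtain ⟨hxV, hxact, hmin⟩ := hx
  have hjump : ∀ y : ℤ, x - 1 ≤ y → ARWInv n (applyInstr (Instr.jump y) x c) := by
    intro y hy a ha b hb hab hact hsleep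
    by_cases hby : b = y
    · subst hby
      simp only [applyInstr] at hsleep
      rw [Function.update_self] at hsleep
      exact ARW_add_ne_sleeping _ hsleep
    by_cases hbx : b = x
    · subst hbx
      simp only [applyInstr] at hsleep
      rw [Function.update_of_ne hby, Function.update_self] at hsleep
      exact ARW_remove_ne_sleeping _ hsleep
    rw [ARW_jump_apply_ne x y b c hby hbx] at hsleep
    by_cases hax : a = x
    · subst hax; exact hc a hxV b hb hab hxact hsleep
    by_cases hay : a = y
    · subst hay
      exact hc x hxV b hb (by omega) hxact hsleep
    rw [ARW_jump_apply_ne x y a c hay hax] at hact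
    exact hc a ha b hb hab hact hsleep
  rcases hι with rfl | rfl | rfl
  · intro a ha b hb hab hact hsleep
    simp only [applyInstr] at hact hsleep
    by_cases hbx : b = x
    · subst hbx
      rw [Function.update_of_ne (by omega : a ≠ b)] at hact
      have := hmin a ha hact
      omega
    · rw [Function.update_of_ne hbx] at hsleep
      by_cases hax : a = x
      · subst hax; exact hc a hxV b hb hab hxact hsleep
      · rw [Function.update_of_ne hax] at hact
        exact hc a ha b hb hab hact hsleep
  · exact hjump (x + 1) (by omega)
  · exact hjump (x - 1) (by omega)

lemma ARW_inv_seq (n : ℕ) (τ : ℤ → ℕ → Instr ℤ)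
    (hτ : ∀ x i, τ x i = Instr.sleep ∨ τ x i = Instr.jump (x + 1) ∨ τ x i = Instr.jump (x - 1)) :
    ∀ α : List ℤ, ∀ s : SWState ℤ, ARWInv n s.1 → LeftmostSeq τ n α s →
      ARWInv n (toppleSeq τ α s).1 := by
  intro α
  induction α with
  | nil => intro s h _; exact h
  | cons x rest ih =>
    intro s hInv hseq
    obtain ⟨hL, hrest⟩ := hseq
    exact ih (topple τ x s) (ARW_key n s.1 x _ (hτ x (s.2 x)) hInv hL) hrest

lemma ARW_vseg_left (n : ℕ) (hn : 1 ≤ n) (x z : ℤ) (hx : x ∈ Vseg n)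
    (hx1 : x - 1 ∉ Vseg n) (hz : z ∈ Vseg n) : x ≤ z := by
  simp only [Vseg, Finset.mem_filter, Finset.mem_Icc, not_and, not_le, not_lt] at hx hx1 hz
  omega

/-- In dimension 1 with nearest-neighbour instructions, stabilizing `V_n` by repeatedly
toppling the leftmost site of `V_n` containing an active particle, starting from a
configuration with only active particles: after each toppling, there are no sites `x < y`
in `V_n` with an active particle at `x` and a sleeping particle at `y`; consequently, at each
moment when a particle exits `V_n` through the left boundary, every particle remaining in
`V_n` is active. -/

theorem statement16 (n : ℕ) (hn : 1 ≤ n) (τ : ℤ → ℕ → Instr ℤ)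
    (hτ : ∀ x i, τ x i = Instr.sleep ∨ τ x i = Instr.jump (x + 1) ∨ τ x i = Instr.jump (x - 1))
    (η0 : ℤ → ℕ) (η : Config ℤ) (hη : η = fun x => SiteState.act (if x ∈ Vseg n then η0 x else 0)) :
    ∀ α : List ℤ, LeftmostSeq τ n α (init η) →
      -- all sleeping particles lie to the left of the leftmost active particle
      ((∀ x ∈ Vseg n, ∀ y ∈ Vseg n, x < y → 0 < ((toppleSeq τ α (init η)).1 x).activeCount →
          (toppleSeq τ α (init η)).1 y ≠ SiteState.sleeping) ∧
      -- if the next toppling of the procedure sends a particle out of `V_n` to the left,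
      -- then no particle of `V_n` is sleeping after this toppling
      (∀ x y : ℤ, Leftmost n (toppleSeq τ α (init η)).1 x →
          τ x ((toppleSeq τ α (init η)).2 x) = Instr.jump y → y ∉ Vseg n → y < x →
          ∀ z ∈ Vseg n, (toppleSeq τ (α ++ [x]) (init η)).1 z ≠ SiteState.sleeping)) := by
  intro α hα
  have hInv0 : ARWInv n η := by
    intro a _ b _ _ _ hs
    subst hη; simp at hs
  have hInv : ARWInv n (toppleSeq τ α (init η)).1 :=
    ARW_inv_seq n τ hτ α (init η) hInv0 hα
  refine ⟨hInv, ?_⟩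
  intro x y hL hins hyV hyx z hz hsleep
  have hy : y = x - 1 := by
    have h := hτ x ((toppleSeq τ α (init η)).2 x)
    rw [hins] at h
    rcases h with h | h | h
    · exact absurd h (by simp)
    · injection h with h; omega
    · injection h with h
  subst hy
  have happ : toppleSeq τ (α ++ [x]) (init η) = topple τ x (toppleSeq τ α (init η)) := by
    simp [toppleSeq, List.foldl_append]
  rw [happ] at hsleep
  have hcfg : (topple τ x (toppleSeq τ α (init η))).1
      = applyInstr (Instr.jump (x - 1)) x (toppleSeq τ α (init η)).1 := by
    rw [topple, hins]
  rw [hcfg] at hsleep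
  set c := (toppleSeq τ α (init η)).1 with hc
  by_cases hz1 : z = x - 1
  · subst hz1
    simp only [applyInstr] at hsleep
    rw [Function.update_self] at hsleep
    exact ARW_add_ne_sleeping _ hsleep
  by_cases hzx : z = x
  · subst hzx
    simp only [applyInstr] at hsleep
    rw [Function.update_of_ne hz1, Function.update_self] at hsleep
    exact ARW_remove_ne_sleeping _ hsleep
  rw [ARW_jump_apply_ne x (x - 1) z c hz1 hzx] at hsleep
  by_cases hxz : x < z
  · exact hInv x hL.1 z hz hxz hL.2.1 hsleep
  · have := ARW_vseg_left n hn x z hL.1 hyV hz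
    omega

end
end
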